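/- If there is a graph G' on d vertices with no clique of size x and no independent set of size l (i.e., R(x,l) > d), then there is a multiset of d·⌊k/x⌋ subcubes of {0,1}^d whose intersection graph contains no clique of size k and no independent set of size l; hence R_d(k,l) > d·⌊k/x⌋. -/

import Mathlib

/-! Replace each vertex `v` of `G` by the subcube fixing coordinate `v` to `1` and every
non-neighbour of `v` to `0`: two such cubes meet iff their vertices are equal or adjacent (the
indicator of `{v, w}` lies in both). Taking `⌊k/x⌋` copies of each cube realises the blow-up of
`G`: a clique of the blow-up projects onto a clique of `G`, with fibres of size at most `⌊k/x⌋`,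
and an independent set projects injectively onto an independent set of `G`. -/

/-- The subcube of `{0,1}^d` represented by `u ∈ {0,1,*}^d` (`none` = `*`). -/
def cubeSet {d : ℕ} (u : Fin d → Option Bool) : Set (Fin d → Bool) :=
  {x | ∀ i : Fin d, ∀ b : Bool, u i = some b → x i = b}

/-- The intersection graph of a family of subcubes contains a clique of size `k`. -/
def cubesHaveClique {d n : ℕ} (A : Fin n → (Fin d → Option Bool)) (k : ℕ) : Prop :=
  ∃ s : Finset (Fin n), s.card = k ∧
    ∀ i ∈ s, ∀ j ∈ s, i ≠ j → (cubeSet (A i) ∩ cubeSet (A j)).Nonempty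

/-- The intersection graph of a family of subcubes contains an independent set of size `l`. -/
def cubesHaveIndep {d n : ℕ} (A : Fin n → (Fin d → Option Bool)) (l : ℕ) : Prop :=
  ∃ s : Finset (Fin n), s.card = l ∧
    ∀ i ∈ s, ∀ j ∈ s, i ≠ j → cubeSet (A i) ∩ cubeSet (A j) = ∅

/-- `Rd d k l`: the least `n` such that every intersection graph of `n` subcubes of
`{0,1}^d` contains a clique of size `k` or an independent set of size `l`. -/
noncomputable def Rd (d k l : ℕ) : ℕ :=
  sInf {n : ℕ | ∀ A : Fin n → (Fin d → Option Bool),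
    cubesHaveClique A k ∨ cubesHaveIndep A l}

open Finset SimpleGraph

theorem Nat.div_mul_sub_one_lt {k x : ℕ} (hk : 0 < k) : k / x * (x - 1) < k := by
  rcases (k / x).eq_zero_or_pos with h | h
  · rwa [h, zero_mul]
  · have hx : x ≠ 0 := by rintro rfl; simp at h
    calc k / x * (x - 1) < k / x * x := Nat.mul_lt_mul_of_pos_left (by omega) h
      _ ≤ k := Nat.div_mul_le_self k x

namespace SimpleGraph

variable {W ι : Type*} {G : SimpleGraph W}

@[simps]
def blowup (G : SimpleGraph W) (ι : Type*) : SimpleGraph (W × ι) where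
  Adj p q := p ≠ q ∧ (p.1 = q.1 ∨ G.Adj p.1 q.1)
  symm := ⟨fun _ _ h => ⟨h.1.symm, h.2.imp Eq.symm fun h => h.symm⟩⟩
  loopless := ⟨fun _ h => h.1 rfl⟩

theorem CliqueFree.blowup [Fintype ι] {x k : ℕ} (hG : G.CliqueFree x)
    (hk : Fintype.card ι * (x - 1) < k) : (G.blowup ι).CliqueFree k := by
  classical
  intro t ht
  have hclique : G.IsClique (t.image Prod.fst : Set W) := by
    rw [coe_image]
    rintro _ ⟨p, hp, rfl⟩ _ ⟨q, hq, rfl⟩ hpq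
    exact (ht.isClique hp hq (ne_of_apply_ne Prod.fst hpq)).2.resolve_left hpq
  have himage : #(t.image Prod.fst) < x := by
    by_contra! h
    exact hG.mono h _ ⟨hclique, rfl⟩
  refine hk.not_ge ?_
  calc k = #t := ht.card_eq.symm
    _ ≤ #(t.image Prod.fst ×ˢ t.image Prod.snd) := card_le_card subset_product
    _ ≤ #(t.image Prod.fst) * Fintype.card ι := by
      rw [card_product]; exact Nat.mul_le_mul_left _ (card_le_univ _)
    _ ≤ Fintype.card ι * (x - 1) := by
      rw [mul_comm]; exact Nat.mul_le_mul_left _ (Nat.le_sub_one_of_lt himage)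

theorem IndepSetFree.blowup {l : ℕ} (hG : G.IndepSetFree l) : (G.blowup ι).IndepSetFree l := by
  classical
  intro t ht
  have hinj : Set.InjOn Prod.fst (t : Set (W × ι)) := fun p hp q hq h =>
    by_contra fun hpq => ht.isIndepSet hp hq hpq ⟨hpq, Or.inl h⟩
  refine hG (t.image Prod.fst) ⟨?_, by rw [card_image_of_injOn hinj, ht.card_eq]⟩
  rw [coe_image]
  rintro _ ⟨p, hp, rfl⟩ _ ⟨q, hq, rfl⟩ hpq hadj
  have hne := ne_of_apply_ne Prod.fst hpq
  exact ht.isIndepSet hp hq hne ⟨hne, .inr hadj⟩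

end SimpleGraph

section Cubes

variable {d : ℕ}

theorem cubeSet_nonempty (u : Fin d → Option Bool) : (cubeSet u).Nonempty :=
  ⟨fun i => (u i).getD false, fun i b h => by simp [h]⟩

@[simps]
def cubeGraph {ι : Type*} (A : ι → Fin d → Option Bool) : SimpleGraph ι where
  Adj i j := i ≠ j ∧ (cubeSet (A i) ∩ cubeSet (A j)).Nonempty
  symm := ⟨fun _ _ h => ⟨h.1.symm, Set.inter_comm (cubeSet _) _ ▸ h.2⟩⟩
  loopless := ⟨fun _ h => h.1 rfl⟩

variable {ι : Type*} {A : ι → Fin d → Option Bool} {n : ℕ}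

theorem cubesHaveClique.not_cliqueFree {k : ℕ} (e : Fin n ↪ ι)
    (h : cubesHaveClique (A ∘ e) k) : ¬(cubeGraph A).CliqueFree k := by
  obtain ⟨s, hs, hmeet⟩ := h
  refine IsNClique.not_cliqueFree (s := s.map e) ⟨?_, by rw [card_map, hs]⟩
  rw [coe_map]
  rintro _ ⟨i, hi, rfl⟩ _ ⟨j, hj, rfl⟩ hij
  exact ⟨hij, hmeet i hi j hj (ne_of_apply_ne e hij)⟩

theorem cubesHaveIndep.not_indepSetFree {l : ℕ} (e : Fin n ↪ ι)
    (h : cubesHaveIndep (A ∘ e) l) : ¬(cubeGraph A).IndepSetFree l := by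
  obtain ⟨s, hs, hdisj⟩ := h
  refine fun hfree => hfree (s.map e) ⟨?_, by rw [card_map, hs]⟩
  rw [coe_map]
  rintro _ ⟨i, hi, rfl⟩ _ ⟨j, hj, rfl⟩ hij ⟨-, hmeet⟩
  exact hmeet.ne_empty (hdisj i hi j hj (ne_of_apply_ne e hij))

theorem cubesHaveClique_of_three_pow_mul_lt {k : ℕ} (A : Fin n → Fin d → Option Bool)
    (h : 3 ^ d * (k - 1) < n) : cubesHaveClique A k := by
  classical
  obtain ⟨u, hu⟩ := Fintype.exists_lt_card_fiber_of_mul_lt_card (f := A)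
    (by simpa [Fintype.card_fun] using h)
  obtain ⟨s, hsub, hs⟩ := exists_subset_card_eq (show k ≤ #{i | A i = u} by omega)
  refine ⟨s, hs, fun i hi j hj _ => ?_⟩
  rw [(mem_filter.1 (hsub hi)).2, (mem_filter.1 (hsub hj)).2, Set.inter_self]
  exact cubeSet_nonempty u

theorem lt_Rd [Fintype ι] {k l : ℕ} (A : ι → Fin d → Option Bool)
    (hk : (cubeGraph A).CliqueFree k) (hl : (cubeGraph A).IndepSetFree l) :
    Fintype.card ι < Rd d k l := by
  -- `Rd` is a genuine minimum: among `3^d (k - 1) + 1` cubes, some `k` coincide.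
  have hne : {n : ℕ | ∀ A : Fin n → (Fin d → Option Bool),
      cubesHaveClique A k ∨ cubesHaveIndep A l}.Nonempty :=
    ⟨3 ^ d * (k - 1) + 1, fun A => .inl (cubesHaveClique_of_three_pow_mul_lt A (by omega))⟩
  refine by_contra fun hle => ?_
  let e : Fin (Rd d k l) ↪ ι :=
    (Fin.castLEEmb (not_lt.1 hle)).trans (Fintype.equivFin ι).symm.toEmbedding
  rcases Nat.sInf_mem hne (A ∘ e) with hclique | hindep
  · exact hclique.not_cliqueFree e hk
  · exact hindep.not_indepSetFree e hl

variable (G : SimpleGraph (Fin d)) [DecidableRel G.Adj]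

def graphCube (v : Fin d) : Fin d → Option Bool :=
  fun i => if i = v then some true else if G.Adj v i then none else some false

theorem mem_cubeSet_graphCube {v : Fin d} {y : Fin d → Bool} :
    y ∈ cubeSet (graphCube G v) ↔ y v = true ∧ ∀ i, i ≠ v → ¬G.Adj v i → y i = false := by
  refine ⟨fun h => ⟨h v true (by simp [graphCube]), fun i hiv hadj =>
    h i false (by simp [graphCube, hiv, hadj])⟩, fun ⟨hv, hrest⟩ i b hb => ?_⟩
  unfold graphCube at hb
  split_ifs at hb with hiv hadj <;> cases hb
  · exact hiv ▸ hv
  · exact hrest i hiv hadj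

theorem cubeSet_graphCube_inter_nonempty_iff {v w : Fin d} :
    (cubeSet (graphCube G v) ∩ cubeSet (graphCube G w)).Nonempty ↔ v = w ∨ G.Adj v w := by
  constructor
  · rintro ⟨y, hyv, hyw⟩
    by_contra! h
    rw [mem_cubeSet_graphCube] at hyv hyw
    simpa [hyv.1] using hyw.2 v h.1 (fun hwv => h.2 hwv.symm)
  · rintro (rfl | hadj)
    · simpa using cubeSet_nonempty (graphCube G v)
    · refine ⟨fun i => decide (i = v ∨ i = w), ?_, ?_⟩ <;> rw [mem_cubeSet_graphCube]
      · simp only [decide_eq_true_eq, true_or, true_and, decide_eq_false_iff_not, not_or]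
        rintro i hiv hvi
        exact ⟨hiv, by rintro rfl; exact hvi hadj⟩
      · simp only [decide_eq_true_eq, or_true, true_and, decide_eq_false_iff_not, not_or]
        rintro i hiw hwi
        exact ⟨by rintro rfl; exact hwi hadj.symm, hiw⟩

theorem cubeGraph_graphCube_fst :
    cubeGraph (fun p : Fin d × ι => graphCube G p.1) = G.blowup ι := by
  ext p q
  simp [cubeSet_graphCube_inter_nonempty_iff]

end Cubes

/-- If there is a graph on `d` vertices with no clique of size `x` and no independent
set of size `l` (i.e. `R(x,l) > d`), then `R_d(k,l) > d·⌊k/x⌋`. -/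
theorem Rd_lower_bound {d k l x : ℕ} (hk : 1 ≤ k)
    (G : SimpleGraph (Fin d))
    (hclique : G.CliqueFree x) (hindep : Gᶜ.CliqueFree l) :
    d * (k / x) < Rd d k l := by
  classical
  have hblowup := cubeGraph_graphCube_fst (ι := Fin (k / x)) G
  simpa using lt_Rd (fun p : Fin d × Fin (k / x) => graphCube G p.1)
    (hblowup ▸ hclique.blowup (by simpa using Nat.div_mul_sub_one_lt hk))
    (hblowup ▸ ((cliqueFree_compl G).1 hindep).blowup)
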